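/- arXiv:2503.20393 — 2 statements merged into one kernel-verified Lean document; each statement's English description precedes it below -/
import Mathlib

section
/- The coefficient Λ(Y|X) satisfies Λ(Y|X) = 4 α(X)⁻¹ ∫_{ℝ^p×ℝ^p} ( Ψ(κ(x₁), κ(x₂)) − 1/2 )² d(μ_X ⊗ μ_X)(x₁, x₂) = 4 α(X)⁻¹ ( ∫_{ℝ^p×ℝ^p} Ψ(κ(x₁), κ(x₂))² d(μ_X ⊗ μ_X)(x₁, x₂) − 1/4 ), and 0 ≤ Λ(Y|X) ≤ 1. -/
open MeasureTheory ProbabilityTheory Set Filter Topology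

/-- The (nonparametric) relative effect `Ψ(μ, ν) = ∫ μ((-∞,y)) + (1/2) μ({y}) dν(y)`. -/
noncomputable def relEffect (μ ν : Measure ℝ) : ℝ :=
  ∫ y, ((μ (Set.Iio y)).toReal + (1 / 2) * (μ {y}).toReal) ∂ν

/-- `α(μ) = 1 - ∫ μ({x}) dμ(x) = 1 - P(X = X*)`, the non-discrete mass of `μ`. -/
noncomputable def alphaCoeff {E : Type*} [MeasurableSpace E] (μ : Measure E) : ℝ :=
  1 - ∫ x, (μ {x}).toReal ∂μ

/-- The coefficient of separation `Λ(Y|X)`. -/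
noncomputable def sepCoeff {Ω E : Type*} [MeasurableSpace Ω] [MeasurableSpace E]
    (P : Measure Ω) [IsFiniteMeasure P] (Y : Ω → ℝ) (X : Ω → E) : ℝ :=
  (alphaCoeff (P.map X))⁻¹ *
    ∫ x : E × E,
      (relEffect (condDistrib Y X P x.1) (condDistrib Y X P x.2)
        - relEffect (condDistrib Y X P x.2) (condDistrib Y X P x.1)) ^ 2
      ∂((P.map X).prod (P.map X))

/-- A random variable is non-degenerate if it is not a.s. constant. -/
def Nondegenerate {Ω α : Type*} [MeasurableSpace Ω] (P : Measure Ω) (Z : Ω → α) : Prop :=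
  ¬ ∃ c, ∀ᵐ ω ∂P, Z ω = c

/-!
By Fubini, `Ψ(μ, ν)` is the integral over `μ ⊗ ν` of the normalized step `h(z, y)`, which is
`1`, `1/2` or `0` according as `z < y`, `z = y` or `z > y`. Since `h(z, y) + h(y, z) = 1`, this
gives `Ψ(μ, ν) + Ψ(ν, μ) = 1` for probability measures, so `G(x₁, x₂) := Ψ(κ(x₁), κ(x₂))`
satisfies `G - G ∘ swap = 2 (G - 1/2)`, and `∫ G = 1/2` because `μ_X ⊗ μ_X` is swap-invariant.
This gives both representations. For the range, `(G - G ∘ swap)²` vanishes on the diagonal and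
is at most `1` off it, so its integral is at most the mass of the off-diagonal, which is `α(X)`.
-/

noncomputable def normalizedStep (p : ℝ × ℝ) : ℝ :=
  {q : ℝ × ℝ | q.1 < q.2}.indicator 1 p + 2⁻¹ * (diagonal ℝ).indicator 1 p

lemma measurable_normalizedStep : Measurable normalizedStep :=
  (measurable_one.indicator (measurableSet_lt measurable_fst measurable_snd)).add
    ((measurable_one.indicator measurableSet_diagonal).const_mul _)

lemma normalizedStep_nonneg (p : ℝ × ℝ) : 0 ≤ normalizedStep p := by
  simp only [normalizedStep, indicator_apply]
  split_ifs <;> norm_num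

lemma normalizedStep_add_swap (p : ℝ × ℝ) : normalizedStep p + normalizedStep p.swap = 1 := by
  obtain ⟨z, y⟩ := p
  rcases lt_trichotomy z y with h | rfl | h
  · simp [normalizedStep, h, h.ne, h.ne', h.not_gt]
  · norm_num [normalizedStep, indicator_apply]
  · simp [normalizedStep, h, h.ne, h.ne', h.not_gt]

lemma normalizedStep_le_one (p : ℝ × ℝ) : normalizedStep p ≤ 1 := by
  linarith [normalizedStep_add_swap p, normalizedStep_nonneg p.swap]

lemma integrable_normalizedStep (ρ : Measure (ℝ × ℝ)) [IsFiniteMeasure ρ] :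
    Integrable normalizedStep ρ :=
  .of_bound measurable_normalizedStep.aestronglyMeasurable 1 <| ae_of_all _ fun p => by
    rw [Real.norm_of_nonneg (normalizedStep_nonneg p)]
    exact normalizedStep_le_one p

lemma integral_normalizedStep_left (μ : Measure ℝ) [IsFiniteMeasure μ] (y : ℝ) :
    ∫ z, normalizedStep (z, y) ∂μ = (μ (Iio y)).toReal + 1 / 2 * (μ {y}).toReal := by
  have h : (fun z => normalizedStep (z, y))
      = fun z => (Iio y).indicator 1 z + 2⁻¹ * ({y} : Set ℝ).indicator 1 z := by
    ext z
    simp [normalizedStep, indicator_apply]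
  rw [h, integral_add ((integrable_const 1).indicator measurableSet_Iio)
      (((integrable_const 1).indicator (measurableSet_singleton y)).const_mul _),
    integral_const_mul, integral_indicator_one measurableSet_Iio,
    integral_indicator_one (measurableSet_singleton y)]
  norm_num [measureReal_def]

lemma relEffect_eq_integral_prod (μ ν : Measure ℝ) [IsFiniteMeasure μ] [IsFiniteMeasure ν] :
    relEffect μ ν = ∫ p, normalizedStep p ∂(μ.prod ν) := by
  simp_rw [integral_prod_symm _ (integrable_normalizedStep _), integral_normalizedStep_left]
  rfl

lemma relEffect_add_relEffect (μ ν : Measure ℝ) [IsProbabilityMeasure μ]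
    [IsProbabilityMeasure ν] : relEffect μ ν + relEffect ν μ = 1 := by
  have hswap : Integrable (fun z : ℝ × ℝ => normalizedStep z.swap) (μ.prod ν) :=
    (integrable_normalizedStep (ν.prod μ)).swap
  rw [relEffect_eq_integral_prod, relEffect_eq_integral_prod,
    ← integral_prod_swap (μ := ν) (ν := μ) normalizedStep,
    ← integral_add (integrable_normalizedStep _) hswap]
  simp_rw [normalizedStep_add_swap, integral_const, probReal_univ, one_smul]

lemma relEffect_nonneg (μ ν : Measure ℝ) : 0 ≤ relEffect μ ν :=
  integral_nonneg fun _ => by positivity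

lemma measurable_relEffect {α β : Type*} [MeasurableSpace α] [MeasurableSpace β]
    (κ : Kernel α ℝ) (η : Kernel β ℝ) [IsFiniteKernel κ] [IsFiniteKernel η] :
    Measurable fun x : α × β => relEffect (κ x.1) (η x.2) := by
  have h := (measurable_normalizedStep.comp measurable_snd).stronglyMeasurable
    |>.integral_kernel_prod_right' (κ := κ.comap Prod.fst measurable_fst ×ₖ
      η.comap Prod.snd measurable_snd)
  simp_rw [relEffect_eq_integral_prod]
  simpa [Kernel.prod_apply, Kernel.comap_apply] using h.measurable

lemma alphaCoeff_eq_measureReal_compl_diagonal {E : Type*} [MeasurableSpace E] [MeasurableEq E]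
    (μ : Measure E) [IsProbabilityMeasure μ] :
    alphaCoeff μ = (μ.prod μ).real (diagonal E)ᶜ := by
  have hfiber (x : E) : Prod.mk x ⁻¹' diagonal E = {x} := by
    ext y
    simp [eq_comm]
  have hatom : Measurable fun x => μ {x} := by
    simpa only [hfiber] using measurable_measure_prodMk_left (ν := μ) measurableSet_diagonal
  rw [measureReal_compl measurableSet_diagonal, probReal_univ, measureReal_def,
    Measure.prod_apply measurableSet_diagonal, alphaCoeff,
    integral_toReal hatom.aemeasurable (ae_of_all _ fun x => measure_lt_top μ {x})]
  simp_rw [hfiber]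

lemma sq_sub_swap_le_one {E : Type*} {g : E × E → ℝ} (hsum : ∀ x, g x + g x.swap = 1)
    (hnn : ∀ x, 0 ≤ g x) (x : E × E) : (g x - g x.swap) ^ 2 ≤ 1 := by
  nlinarith [hsum x, hnn x, hnn x.swap]

section AddSwapEqOne

variable {E : Type*} [MeasurableSpace E] {g : E × E → ℝ}

lemma integral_sq_sub_swap_eq_four_mul (ρ : Measure (E × E)) (hsum : ∀ x, g x + g x.swap = 1) :
    ∫ x, (g x - g x.swap) ^ 2 ∂ρ = 4 * ∫ x, (g x - 1 / 2) ^ 2 ∂ρ := by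
  rw [← integral_const_mul]
  congr 1 with x
  rw [show g x.swap = 1 - g x by linarith [hsum x]]
  ring

variable (hg : Measurable g) (hsum : ∀ x, g x + g x.swap = 1) (hnn : ∀ x, 0 ≤ g x)
include hg hsum hnn

lemma integrable_of_add_swap_eq_one (ρ : Measure (E × E)) [IsFiniteMeasure ρ] :
    Integrable g ρ :=
  .of_bound hg.aestronglyMeasurable 1 <| ae_of_all _ fun x => by
    rw [Real.norm_of_nonneg (hnn x)]
    linarith [hsum x, hnn x.swap]

lemma integral_eq_half_of_add_swap_eq_one (ρ : Measure (E × E)) [IsProbabilityMeasure ρ]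
    (hρ : ρ.map Prod.swap = ρ) : ∫ x, g x ∂ρ = 1 / 2 := by
  have hswap : ∫ x, g x.swap ∂ρ = ∫ x, g x ∂ρ := by
    conv_rhs => rw [← hρ, integral_map measurable_swap.aemeasurable hg.aestronglyMeasurable]
  have hcompl : ∫ x, g x.swap ∂ρ = 1 - ∫ x, g x ∂ρ := by
    calc ∫ x, g x.swap ∂ρ = ∫ x, (1 - g x) ∂ρ := by
          congr 1 with x
          linarith [hsum x]
      _ = 1 - ∫ x, g x ∂ρ := by
          rw [integral_sub (integrable_const 1) (integrable_of_add_swap_eq_one hg hsum hnn ρ),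
            integral_const, probReal_univ, one_smul]
  linarith

lemma integral_sq_sub_half_eq_integral_sq_sub (ρ : Measure (E × E)) [IsProbabilityMeasure ρ]
    (hρ : ρ.map Prod.swap = ρ) : ∫ x, (g x - 1 / 2) ^ 2 ∂ρ = ∫ x, g x ^ 2 ∂ρ - 1 / 4 := by
  have hint := integrable_of_add_swap_eq_one hg hsum hnn ρ
  have hint_sq : Integrable (fun x => g x ^ 2) ρ :=
    .of_bound (hg.pow_const 2).aestronglyMeasurable 1 <| ae_of_all _ fun x => by
      rw [Real.norm_of_nonneg (sq_nonneg _)]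
      nlinarith [hsum x, hnn x, hnn x.swap]
  calc ∫ x, (g x - 1 / 2) ^ 2 ∂ρ = ∫ x, (g x ^ 2 - g x + 1 / 4) ∂ρ := by
        congr 1 with x
        ring
    _ = ∫ x, g x ^ 2 ∂ρ - 1 / 4 := by
        have hint_sub : Integrable (fun x => g x ^ 2 - g x) ρ := hint_sq.sub hint
        rw [integral_add hint_sub (integrable_const _), integral_sub hint_sq hint,
          integral_eq_half_of_add_swap_eq_one hg hsum hnn ρ hρ, integral_const, probReal_univ,
          one_smul]
        ring

lemma integral_sq_sub_swap_le_measureReal_compl_diagonal [MeasurableEq E] (ρ : Measure (E × E))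
    [IsFiniteMeasure ρ] :
    ∫ x, (g x - g x.swap) ^ 2 ∂ρ ≤ ρ.real (diagonal E)ᶜ := by
  have hint : Integrable (fun x => (g x - g x.swap) ^ 2) ρ :=
    .of_bound ((hg.sub (hg.comp measurable_swap)).pow_const 2).aestronglyMeasurable 1 <|
      ae_of_all _ fun x => by
        rw [Real.norm_of_nonneg (sq_nonneg _)]
        exact sq_sub_swap_le_one hsum hnn x
  rw [← integral_indicator_one measurableSet_diagonal.compl]
  refine integral_mono hint ((integrable_const 1).indicator measurableSet_diagonal.compl)
    fun x => ?_
  by_cases hx : x ∈ diagonal E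
  · rw [indicator_of_notMem (not_not_intro hx), show x.swap = x from Prod.ext hx.symm hx]
    simp
  · rw [indicator_of_mem hx]
    exact sq_sub_swap_le_one hsum hnn x

end AddSwapEqOne

theorem sepCoeff_eq_and_mem_Icc_general
    {Ω : Type*} [MeasurableSpace Ω] {p : ℕ}
    (P : Measure Ω) [IsProbabilityMeasure P]
    (X : Ω → (Fin p → ℝ)) (Y : Ω → ℝ)
    (hX : Measurable X) :
    sepCoeff P Y X
      = 4 * (alphaCoeff (P.map X))⁻¹ *
          ∫ x : (Fin p → ℝ) × (Fin p → ℝ),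
            (relEffect (condDistrib Y X P x.1) (condDistrib Y X P x.2) - 1 / 2) ^ 2
            ∂((P.map X).prod (P.map X))
    ∧ sepCoeff P Y X
      = 4 * (alphaCoeff (P.map X))⁻¹ *
          ((∫ x : (Fin p → ℝ) × (Fin p → ℝ),
            relEffect (condDistrib Y X P x.1) (condDistrib Y X P x.2) ^ 2
            ∂((P.map X).prod (P.map X))) - 1 / 4)
    ∧ 0 ≤ sepCoeff P Y X ∧ sepCoeff P Y X ≤ 1 := by
  have := Measure.isProbabilityMeasure_map (μ := P) hX.aemeasurable
  set μ := P.map X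
  set κ := condDistrib Y X P
  set g : (Fin p → ℝ) × (Fin p → ℝ) → ℝ := fun x => relEffect (κ x.1) (κ x.2)
  have hg : Measurable g := measurable_relEffect κ κ
  have hsum (x) : g x + g x.swap = 1 := relEffect_add_relEffect _ _
  have hnn (x) : 0 ≤ g x := relEffect_nonneg _ _
  have hsep : sepCoeff P Y X = (alphaCoeff μ)⁻¹ * ∫ x, (g x - g x.swap) ^ 2 ∂(μ.prod μ) := rfl
  have hI_nonneg : 0 ≤ ∫ x, (g x - g x.swap) ^ 2 ∂(μ.prod μ) :=
    integral_nonneg fun _ => sq_nonneg _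
  have hI_le : ∫ x, (g x - g x.swap) ^ 2 ∂(μ.prod μ) ≤ alphaCoeff μ := by
    rw [alphaCoeff_eq_measureReal_compl_diagonal]
    exact integral_sq_sub_swap_le_measureReal_compl_diagonal hg hsum hnn _
  have hα_nonneg : 0 ≤ alphaCoeff μ := hI_nonneg.trans hI_le
  rw [hsep, ← integral_sq_sub_half_eq_integral_sq_sub hg hsum hnn _ Measure.prod_swap]
  refine ⟨?_, ?_, mul_nonneg (inv_nonneg.2 hα_nonneg) hI_nonneg,
    inv_mul_le_one_of_le₀ hI_le hα_nonneg⟩ <;>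
  · rw [integral_sq_sub_swap_eq_four_mul _ hsum]
    ring

/-- Theorem (alternative representations and range of `Λ`). -/
theorem sepCoeff_eq_and_mem_Icc
    {Ω : Type*} [MeasurableSpace Ω] {p : ℕ} (hp : 1 ≤ p)
    (P : Measure Ω) [IsProbabilityMeasure P]
    (X : Ω → (Fin p → ℝ)) (Y : Ω → ℝ)
    (hX : Measurable X) (hY : Measurable Y)
    (hXnd : ∃ k, Nondegenerate P fun ω => X ω k)
    (hYnd : Nondegenerate P Y) :
    sepCoeff P Y X
      = 4 * (alphaCoeff (P.map X))⁻¹ *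
          ∫ x : (Fin p → ℝ) × (Fin p → ℝ),
            (relEffect (condDistrib Y X P x.1) (condDistrib Y X P x.2) - 1 / 2) ^ 2
            ∂((P.map X).prod (P.map X))
    ∧ sepCoeff P Y X
      = 4 * (alphaCoeff (P.map X))⁻¹ *
          ((∫ x : (Fin p → ℝ) × (Fin p → ℝ),
            relEffect (condDistrib Y X P x.1) (condDistrib Y X P x.2) ^ 2
            ∂((P.map X).prod (P.map X))) - 1 / 4)
    ∧ 0 ≤ sepCoeff P Y X ∧ sepCoeff P Y X ≤ 1 :=
  sepCoeff_eq_and_mem_Icc_general P X Y hX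
end

section
/- Suppose X takes exactly two values x₁ ≠ x₂ in ℝ^p, with P(X = x₁) = q ∈ (0, 1). Then Λ(Y|X) = ( 2 Ψ(κ(x₁), κ(x₂)) − 1 )² = ( Ψ(κ(x₁), κ(x₂)) − Ψ(κ(x₂), κ(x₁)) )²; in particular this value does not depend on q. -/
/-! If `A ∼ μ` and `B ∼ ν` are independent, then `Ψ(μ, ν) = P(A < B) + ½ P(A = B)`, so
`Ψ(μ, ν) + Ψ(ν, μ) = 1` by Fubini. When `μ_X` is carried by `{x₁, x₂}` with weights `q` and
`1 - q`, the diagonal terms of the integral defining `Λ` vanish and the two off-diagonal ones each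
carry mass `q (1 - q)`, while `α(X) = 1 - q² - (1 - q)² = 2 q (1 - q)`: the weights cancel. -/

open MeasureTheory ProbabilityTheory Set Filter Topology

section RelativeEffect

variable (μ ν : Measure ℝ)

theorem relEffect_eq_toReal_lintegral [IsFiniteMeasure μ] :
    relEffect μ ν = (∫⁻ y, 2⁻¹ * (μ (Iio y) + μ (Iic y)) ∂ν).toReal := by
  have hmono : Monotone fun y => 2⁻¹ * (μ (Iio y) + μ (Iic y)) := fun _ _ hab =>
    mul_le_mul_right (add_le_add (measure_mono (Iio_subset_Iio hab))
      (measure_mono (Iic_subset_Iic.2 hab))) _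
  rw [relEffect, ← integral_toReal hmono.measurable.aemeasurable
    (ae_of_all _ fun y => by finiteness)]
  congr with y
  rw [← Iio_union_right, measure_union (by simp) (measurableSet_singleton y)]
  simp [ENNReal.toReal_add, measure_ne_top]
  ring

theorem lintegral_measure_Iio_add_lintegral_measure_Iic [SFinite μ] [SFinite ν] :
    ∫⁻ y, μ (Iio y) ∂ν + ∫⁻ x, ν (Iic x) ∂μ = μ univ * ν univ := by
  have hlt : MeasurableSet {z : ℝ × ℝ | z.1 < z.2} := measurableSet_lt measurable_fst measurable_snd
  have h₁ : ∫⁻ y, μ (Iio y) ∂ν = μ.prod ν {z | z.1 < z.2} := by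
    rw [← Measure.prod_swap, Measure.map_apply measurable_swap hlt,
      Measure.prod_apply (measurable_swap hlt)]
    rfl
  have h₂ : ∫⁻ x, ν (Iic x) ∂μ = μ.prod ν {z | z.1 < z.2}ᶜ := by
    rw [Measure.prod_apply hlt.compl]
    congr with x
    congr with y
    simp
  rw [h₁, h₂, measure_add_measure_compl hlt, ← univ_prod_univ, Measure.prod_prod]

theorem relEffect_add_relEffect_swap [IsProbabilityMeasure μ] [IsProbabilityMeasure ν] :
    relEffect μ ν + relEffect ν μ = 1 := by
  have hmeas (ρ : Measure ℝ) : Measurable fun y => ρ (Iio y) :=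
    Monotone.measurable fun _ _ hab => measure_mono (Iio_subset_Iio hab)
  have h : ∫⁻ y, 2⁻¹ * (μ (Iio y) + μ (Iic y)) ∂ν
      + ∫⁻ x, 2⁻¹ * (ν (Iio x) + ν (Iic x)) ∂μ = 1 := by
    rw [lintegral_const_mul' _ _ (by simp), lintegral_const_mul' _ _ (by simp), ← mul_add,
      lintegral_add_left (hmeas μ), lintegral_add_left (hmeas ν)]
    calc 2⁻¹ * ((∫⁻ y, μ (Iio y) ∂ν + ∫⁻ y, μ (Iic y) ∂ν)
          + (∫⁻ x, ν (Iio x) ∂μ + ∫⁻ x, ν (Iic x) ∂μ))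
        = 2⁻¹ * ((∫⁻ y, μ (Iio y) ∂ν + ∫⁻ x, ν (Iic x) ∂μ)
          + (∫⁻ x, ν (Iio x) ∂μ + ∫⁻ y, μ (Iic y) ∂ν)) := by ring
      _ = 1 := by
        rw [lintegral_measure_Iio_add_lintegral_measure_Iic,
          lintegral_measure_Iio_add_lintegral_measure_Iic]
        simp [one_add_one_eq_two, ENNReal.inv_mul_cancel]
  obtain ⟨hμν, hνμ⟩ := ENNReal.add_ne_top.1 (h ▸ ENNReal.one_ne_top)
  rw [relEffect_eq_toReal_lintegral, relEffect_eq_toReal_lintegral,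
    ← ENNReal.toReal_add hμν hνμ, h, ENNReal.toReal_one]

end RelativeEffect

section FinitelySupported

variable {E E' F : Type*} [MeasurableSpace E] [MeasurableSingletonClass E]
  [MeasurableSpace E'] [MeasurableSingletonClass E']
  [NormedAddCommGroup F] [NormedSpace ℝ F] [CompleteSpace F]

theorem integral_eq_sum_of_ae_mem_finset {μ : Measure E} [IsFiniteMeasure μ] {s : Finset E}
    (hs : ∀ᵐ x ∂μ, x ∈ s) (f : E → F) : ∫ x, f x ∂μ = ∑ x ∈ s, μ.real {x} • f x := by
  rw [← setIntegral_finset s IntegrableOn.finset, Measure.restrict_eq_self_of_ae_mem hs]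

theorem integral_prod_eq_sum_of_ae_mem_finset {μ : Measure E} {ν : Measure E'}
    [IsFiniteMeasure μ] [IsFiniteMeasure ν] {s : Finset E} {t : Finset E'}
    (hs : ∀ᵐ x ∂μ, x ∈ s) (ht : ∀ᵐ y ∂ν, y ∈ t) (f : E × E' → F) :
    ∫ z, f z ∂μ.prod ν = ∑ x ∈ s, ∑ y ∈ t, (μ.real {x} * ν.real {y}) • f (x, y) := by
  have hst : ∀ᵐ z ∂μ.prod ν, z ∈ s ×ˢ t := by
    refine (Measure.ae_prod_mem_iff_ae_ae_mem (s ×ˢ t).measurableSet).2 ?_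
    filter_upwards [hs] with x hx
    filter_upwards [ht] with y hy
    exact Finset.mem_product.2 ⟨hx, hy⟩
  rw [integral_eq_sum_of_ae_mem_finset hst, Finset.sum_product]
  simp_rw [← singleton_prod_singleton, measureReal_prod_prod]

theorem alphaCoeff_eq_of_ae_mem_finset {μ : Measure E} [IsFiniteMeasure μ] {s : Finset E}
    (hs : ∀ᵐ x ∂μ, x ∈ s) : alphaCoeff μ = 1 - ∑ x ∈ s, μ.real {x} ^ 2 := by
  rw [alphaCoeff, integral_eq_sum_of_ae_mem_finset hs]
  simp only [← measureReal_def, smul_eq_mul, sq]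

end FinitelySupported

theorem sepCoeff_two_groups_general
    {Ω : Type*} [MeasurableSpace Ω] {p : ℕ}
    (P : Measure Ω) [IsProbabilityMeasure P]
    (X : Ω → (Fin p → ℝ)) (Y : Ω → ℝ)
    (hX : Measurable X)
    (x₁ x₂ : Fin p → ℝ) (hne : x₁ ≠ x₂)
    (hval : ∀ᵐ ω ∂P, X ω = x₁ ∨ X ω = x₂)
    (q : ℝ) (hq0 : 0 < q) (hq1 : q < 1)
    (hq : P (X ⁻¹' {x₁}) = ENNReal.ofReal q) :
    sepCoeff P Y X
      = (2 * relEffect (condDistrib Y X P x₁) (condDistrib Y X P x₂) - 1) ^ 2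
    ∧ sepCoeff P Y X
      = (relEffect (condDistrib Y X P x₁) (condDistrib Y X P x₂)
          - relEffect (condDistrib Y X P x₂) (condDistrib Y X P x₁)) ^ 2 := by
  set μ := P.map X
  have : IsProbabilityMeasure μ := Measure.isProbabilityMeasure_map hX.aemeasurable
  have hμ : ∀ᵐ x ∂μ, x ∈ ({x₁, x₂} : Finset (Fin p → ℝ)) :=
    (ae_map_iff hX.aemeasurable (Finset.measurableSet {x₁, x₂})).2 (by simpa using hval)
  have hw₁ : μ.real {x₁} = q := by
    rw [map_measureReal_apply hX (measurableSet_singleton _), measureReal_def, hq,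
      ENNReal.toReal_ofReal hq0.le]
  have hw₂ : μ.real {x₂} = 1 - q := by
    have h := integral_eq_sum_of_ae_mem_finset hμ fun _ => (1 : ℝ)
    simp only [integral_const, probReal_univ, smul_eq_mul, mul_one, Finset.sum_pair hne, hw₁] at h
    linarith
  have hα : alphaCoeff μ = 2 * q * (1 - q) := by
    rw [alphaCoeff_eq_of_ae_mem_finset hμ, Finset.sum_pair hne, hw₁, hw₂]
    ring
  have hsep : sepCoeff P Y X = (relEffect (condDistrib Y X P x₁) (condDistrib Y X P x₂)
      - relEffect (condDistrib Y X P x₂) (condDistrib Y X P x₁)) ^ 2 := by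
    rw [sepCoeff, hα, integral_prod_eq_sum_of_ae_mem_finset hμ hμ]
    simp only [Finset.sum_pair hne, hw₁, hw₂, sub_self]
    have hq₀ : q ≠ 0 := hq0.ne'
    have hq₁ : 1 - q ≠ 0 := sub_ne_zero.2 hq1.ne'
    field_simp
    ring
  refine ⟨?_, hsep⟩
  rw [hsep, ← relEffect_add_relEffect_swap (condDistrib Y X P x₁) (condDistrib Y X P x₂)]
  ring

/-- For a two-valued predictor, `Λ(Y|X)` mimics the relative effect of the two
conditional distributions and does not depend on the group weight `q`. -/
theorem sepCoeff_two_groups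
    {Ω : Type*} [MeasurableSpace Ω] {p : ℕ} (hp : 1 ≤ p)
    (P : Measure Ω) [IsProbabilityMeasure P]
    (X : Ω → (Fin p → ℝ)) (Y : Ω → ℝ)
    (hX : Measurable X) (hY : Measurable Y)
    (hYnd : Nondegenerate P Y)
    (x₁ x₂ : Fin p → ℝ) (hne : x₁ ≠ x₂)
    (hval : ∀ᵐ ω ∂P, X ω = x₁ ∨ X ω = x₂)
    (q : ℝ) (hq0 : 0 < q) (hq1 : q < 1)
    (hq : P (X ⁻¹' {x₁}) = ENNReal.ofReal q) :
    sepCoeff P Y X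
      = (2 * relEffect (condDistrib Y X P x₁) (condDistrib Y X P x₂) - 1) ^ 2
    ∧ sepCoeff P Y X
      = (relEffect (condDistrib Y X P x₁) (condDistrib Y X P x₂)
          - relEffect (condDistrib Y X P x₂) (condDistrib Y X P x₁)) ^ 2 :=
  sepCoeff_two_groups_general P X Y hX x₁ x₂ hne hval q hq0 hq1 hq
end
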